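/- In H: (i) z_i t_{ζ_j} = t_{ζ_j} z_i for all 1 ≤ i, j ≤ n; (ii) z_i t_{s_i} = t_{s_i} z_{i+1} − c_0 π_i for 1 ≤ i ≤ n−1; and (iii) z_i t_{s_j} = t_{s_j} z_i whenever 1 ≤ j ≤ n−1 and i ∉ {j, j+1}. -/
import Mathlib


/-- `ζ = e^{2πi/r}`. -/
noncomputable def zeta (r : ℕ) : ℂ := Complex.exp (2 * Real.pi * Complex.I / r)

theorem zeta_pow_self {r : ℕ} (hr : 0 < r) : zeta r ^ r = 1 := by
  rw [zeta, ← Complex.exp_nat_mul, mul_comm, div_mul_cancel₀, Complex.exp_two_pi_mul_I]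
  exact_mod_cast Nat.cast_ne_zero.mpr hr.ne'

theorem zeta_zpow_root (r : ℕ) (l : ℤ) : (zeta r ^ l) ^ r = 1 := by
  rcases Nat.eq_zero_or_pos r with h | h
  · rw [h, pow_zero]
  · rw [← zpow_natCast, ← zpow_mul, mul_comm, zpow_mul, zpow_natCast,
      zeta_pow_self h, one_zpow]

/-- The elements of `G(r,1,n)`: `n × n` monomial matrices whose nonzero entries are
`r`-th roots of unity. -/
def IsGMonomial (r n : ℕ) (w : Matrix (Fin n) (Fin n) ℂ) : Prop :=
  ∃ (σ : Equiv.Perm (Fin n)) (a : Fin n → ℂ), (∀ i, a i ^ r = 1) ∧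
    ∀ i j, w i j = if i = σ j then a j else 0

theorem IsGMonomial.mul {r n : ℕ} {w v : Matrix (Fin n) (Fin n) ℂ}
    (hw : IsGMonomial r n w) (hv : IsGMonomial r n v) : IsGMonomial r n (w * v) := by
  obtain ⟨σ, a, ha, hwe⟩ := hw
  obtain ⟨τ, b, hb, hve⟩ := hv
  refine ⟨σ * τ, fun j => a (τ j) * b j, fun j => by rw [mul_pow, ha, hb, one_mul], ?_⟩
  intro i j
  rw [Matrix.mul_apply, Finset.sum_eq_single (τ j)]
  · rw [hwe, hve, if_pos rfl, Equiv.Perm.mul_apply]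
    simp [ite_mul]
  · intro k _ hk
    rw [hve, if_neg hk, mul_zero]
  · simp

/-- The diagonal matrix `ζ_i^l`, with `ζ^l` in position `i` and `1`'s elsewhere. -/
noncomputable def zmat (r n : ℕ) (i : Fin n) (l : ℤ) : Matrix (Fin n) (Fin n) ℂ :=
  Matrix.diagonal (fun a => if a = i then zeta r ^ l else 1)

theorem isGMonomial_zmat (r : ℕ) {n : ℕ} (i : Fin n) (l : ℤ) :
    IsGMonomial r n (zmat r n i l) := by
  refine ⟨1, fun b => if b = i then zeta r ^ l else 1, ?_, ?_⟩
  · intro b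
    dsimp only
    split
    · exact zeta_zpow_root r l
    · exact one_pow r
  · intro a b
    rcases eq_or_ne a b with h | h
    · subst h; simp [zmat, Matrix.diagonal_apply]
    · simp [zmat, Matrix.diagonal_apply_ne _ h, Equiv.Perm.one_apply, h]

/-- The transposition (permutation) matrix `s_{ij}` interchanging coordinates `i` and `j`. -/
def smat {n : ℕ} (i j : Fin n) : Matrix (Fin n) (Fin n) ℂ :=
  Matrix.of fun a b => if a = Equiv.swap i j b then 1 else 0

theorem isGMonomial_smat (r : ℕ) {n : ℕ} (i j : Fin n) : IsGMonomial r n (smat i j) :=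
  ⟨Equiv.swap i j, fun _ => 1, fun _ => one_pow r, fun a b => by simp [smat]⟩

/-- The group `G(r,1,n)` of monomial matrices, as a subtype of matrices. -/
def GMon (r n : ℕ) : Type := {w : Matrix (Fin n) (Fin n) ℂ // IsGMonomial r n w}

/-- `ζ_i^l` as an element of `G(r,1,n)`. -/
noncomputable def zetaW (r : ℕ) {n : ℕ} (i : Fin n) (l : ℤ) : GMon r n :=
  ⟨zmat r n i l, isGMonomial_zmat r i l⟩

/-- `s_{ij}` as an element of `G(r,1,n)`. -/
noncomputable def sW (r : ℕ) {n : ℕ} (i j : Fin n) : GMon r n :=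
  ⟨smat i j, isGMonomial_smat r i j⟩

/-- The reflection `ζ_i^l s_{ij} ζ_i^{-l}` as an element of `G(r,1,n)`. -/
noncomputable def reflW (r : ℕ) {n : ℕ} (i j : Fin n) (l : ℤ) : GMon r n :=
  ⟨zmat r n i l * smat i j * zmat r n i (-l),
    ((isGMonomial_zmat r i l).mul (isGMonomial_smat r i j)).mul (isGMonomial_zmat r i (-l))⟩

/-- The element `ζ_i^l ζ_j^{-l}` of `G(r,1,n)`. -/
noncomputable def pairW (r : ℕ) {n : ℕ} (i j : Fin n) (l : ℤ) : GMon r n :=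
  ⟨zmat r n i l * zmat r n j (-l),
    (isGMonomial_zmat r i l).mul (isGMonomial_zmat r j (-l))⟩

/-- Generators of the rational Cherednik algebra of `G(r,1,n)`:
`x_1, …, x_n`, `y_1, …, y_n` and `t_w` for `w ∈ G(r,1,n)`. -/
inductive CGen (r n : ℕ) where
  | X (i : Fin n) : CGen r n
  | Y (i : Fin n) : CGen r n
  | T (w : GMon r n) : CGen r n

/-- The defining relations of the rational Cherednik algebra of `G(r,1,n)` with
parameters `κ, c₀, c_1, …, c_{r-1}`. -/
inductive CRel (r n : ℕ) (κ c₀ : ℂ) (c : ℕ → ℂ) :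
    FreeAlgebra ℂ (CGen r n) → FreeAlgebra ℂ (CGen r n) → Prop
  | t_mul (u w v : GMon r n) : u.1 = w.1 * v.1 → CRel r n κ c₀ c
      (FreeAlgebra.ι ℂ (.T u)) (FreeAlgebra.ι ℂ (.T w) * FreeAlgebra.ι ℂ (.T v))
  | t_one (u : GMon r n) : u.1 = 1 → CRel r n κ c₀ c (FreeAlgebra.ι ℂ (.T u)) 1
  | t_x (w : GMon r n) (i : Fin n) : CRel r n κ c₀ c
      (FreeAlgebra.ι ℂ (.T w) * FreeAlgebra.ι ℂ (.X i))
      (∑ j, (w.1⁻¹ i j) • (FreeAlgebra.ι ℂ (.X j) * FreeAlgebra.ι ℂ (.T w)))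
  | t_y (w : GMon r n) (i : Fin n) : CRel r n κ c₀ c
      (FreeAlgebra.ι ℂ (.T w) * FreeAlgebra.ι ℂ (.Y i))
      (∑ j, (w.1 j i) • (FreeAlgebra.ι ℂ (.Y j) * FreeAlgebra.ι ℂ (.T w)))
  | xx (i j : Fin n) : CRel r n κ c₀ c
      (FreeAlgebra.ι ℂ (.X i) * FreeAlgebra.ι ℂ (.X j))
      (FreeAlgebra.ι ℂ (.X j) * FreeAlgebra.ι ℂ (.X i))
  | yy (i j : Fin n) : CRel r n κ c₀ c
      (FreeAlgebra.ι ℂ (.Y i) * FreeAlgebra.ι ℂ (.Y j))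
      (FreeAlgebra.ι ℂ (.Y j) * FreeAlgebra.ι ℂ (.Y i))
  | yx_ne (i j : Fin n) : i ≠ j → CRel r n κ c₀ c
      (FreeAlgebra.ι ℂ (.Y i) * FreeAlgebra.ι ℂ (.X j))
      (FreeAlgebra.ι ℂ (.X j) * FreeAlgebra.ι ℂ (.Y i) +
        c₀ • ∑ l ∈ Finset.range r,
          (zeta r ^ (-(l : ℤ))) • FreeAlgebra.ι ℂ (.T (reflW r i j (l : ℤ))))
  | yx_eq (i : Fin n) : CRel r n κ c₀ c
      (FreeAlgebra.ι ℂ (.Y i) * FreeAlgebra.ι ℂ (.X i))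
      (FreeAlgebra.ι ℂ (.X i) * FreeAlgebra.ι ℂ (.Y i) + κ • (1 : FreeAlgebra ℂ (CGen r n))
        - ∑ l ∈ Finset.Ico 1 r,
            (c l * (1 - zeta r ^ (-(l : ℤ)))) • FreeAlgebra.ι ℂ (.T (zetaW r i (l : ℤ)))
        - c₀ • ∑ j ∈ Finset.univ.erase i, ∑ l ∈ Finset.range r,
            FreeAlgebra.ι ℂ (.T (reflW r i j (l : ℤ))))

variable (r n : ℕ) (κ c₀ : ℂ) (c : ℕ → ℂ)

/-- The image of `x_i` in the rational Cherednik algebra of `G(r,1,n)`. -/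
noncomputable def cX (i : Fin n) : RingQuot (CRel r n κ c₀ c) :=
  RingQuot.mkAlgHom ℂ (CRel r n κ c₀ c) (FreeAlgebra.ι ℂ (.X i))

/-- The image of `y_i` in the rational Cherednik algebra of `G(r,1,n)`. -/
noncomputable def cY (i : Fin n) : RingQuot (CRel r n κ c₀ c) :=
  RingQuot.mkAlgHom ℂ (CRel r n κ c₀ c) (FreeAlgebra.ι ℂ (.Y i))

/-- The image of `t_w` in the rational Cherednik algebra of `G(r,1,n)`. -/
noncomputable def cT (w : GMon r n) : RingQuot (CRel r n κ c₀ c) :=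
  RingQuot.mkAlgHom ℂ (CRel r n κ c₀ c) (FreeAlgebra.ι ℂ (.T w))

/-- `φ_i = Σ_{j<i} Σ_{l=0}^{r-1} t_{ζ_i^l s_{ij} ζ_i^{-l}}`. -/
noncomputable def cPhi (i : Fin n) : RingQuot (CRel r n κ c₀ c) :=
  ∑ j ∈ Finset.univ.filter (fun j : Fin n => j < i), ∑ l ∈ Finset.range r,
    cT r n κ c₀ c (reflW r i j (l : ℤ))

/-- The Dunkl–Opdam–Cherednik element `z_i = y_i x_i + c₀ φ_i`. -/
noncomputable def cz (i : Fin n) : RingQuot (CRel r n κ c₀ c) :=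
  cY r n κ c₀ c i * cX r n κ c₀ c i + c₀ • cPhi r n κ c₀ c i

/-- `π_i = Σ_{l=0}^{r-1} t_{ζ_i^l ζ_{i+1}^{-l}}` (here with the two indices `i`, `i+1`
passed separately). -/
noncomputable def cPi (i j : Fin n) : RingQuot (CRel r n κ c₀ c) :=
  ∑ l ∈ Finset.range r, cT r n κ c₀ c (pairW r i j (l : ℤ))

/-- The idempotent `ε_{ij} = (1/r) Σ_{l=0}^{r-1} ζ^{-lj} t_{ζ_i^l}`. -/
noncomputable def cEps (i : Fin n) (j : ℤ) : RingQuot (CRel r n κ c₀ c) :=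
  (r : ℂ)⁻¹ • ∑ l ∈ Finset.range r, (zeta r ^ (-(l : ℤ) * j)) • cT r n κ c₀ c (zetaW r i (l : ℤ))

/-- The reparametrised constants `d_j = Σ_{l=1}^{r-1} ζ^{lj} c_l`. -/
noncomputable def dpar (j : ℤ) : ℂ := ∑ l ∈ Finset.Ico 1 r, zeta r ^ ((l : ℤ) * j) * c l
section Aux
variable {r n : ℕ}

theorem zeta_ne_zero (r : ℕ) : zeta r ≠ 0 := Complex.exp_ne_zero _

theorem zmat_mul_zmat (i : Fin n) (l m : ℤ) :
    zmat r n i l * zmat r n i m = zmat r n i (l + m) := by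
  ext a b
  simp only [zmat, Matrix.diagonal_mul_diagonal, Matrix.diagonal_apply]
  split_ifs <;> simp [← zpow_add₀ (zeta_ne_zero r)]

theorem zmat_zero (i : Fin n) : zmat r n i 0 = 1 := by
  ext a b
  simp only [zmat, Matrix.diagonal_apply, Matrix.one_apply]
  split_ifs <;> simp

theorem zmat_comm (i j : Fin n) (l m : ℤ) :
    zmat r n i l * zmat r n j m = zmat r n j m * zmat r n i l := by
  ext a b
  simp only [zmat, Matrix.diagonal_mul_diagonal, Matrix.diagonal_apply]
  split_ifs <;> ring

theorem zmat_inv (i : Fin n) (l : ℤ) : (zmat r n i l)⁻¹ = zmat r n i (-l) :=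
  Matrix.inv_eq_right_inv (by rw [zmat_mul_zmat, add_neg_cancel, zmat_zero])

theorem zmat_period (hr : 0 < r) (i : Fin n) (l : ℤ) :
    zmat r n i (l + r) = zmat r n i l := by
  ext a b
  simp only [zmat, Matrix.diagonal_apply]
  split_ifs <;>
    simp [zpow_add₀ (zeta_ne_zero r), zpow_natCast, zeta_pow_self hr]

theorem smat_comm (i j : Fin n) : smat i j = smat j i := by
  ext a b
  simp [smat, Equiv.swap_comm]

theorem smat_mul_apply (p q : Fin n) (M : Matrix (Fin n) (Fin n) ℂ) (x y : Fin n) :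
    (smat p q * M) x y = M (Equiv.swap p q x) y := by
  rw [Matrix.mul_apply, Finset.sum_eq_single (Equiv.swap p q x)]
  · rw [smat, Matrix.of_apply, if_pos (Equiv.swap_apply_self p q x).symm, one_mul]
  · intro k _ hk
    rw [smat, Matrix.of_apply, if_neg, zero_mul]
    intro h
    exact hk (by rw [h, Equiv.swap_apply_self])
  · simp

theorem mul_smat_apply (p q : Fin n) (M : Matrix (Fin n) (Fin n) ℂ) (x y : Fin n) :
    (M * smat p q) x y = M x (Equiv.swap p q y) := by
  rw [Matrix.mul_apply, Finset.sum_eq_single (Equiv.swap p q y)]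
  · rw [smat, Matrix.of_apply, if_pos rfl, mul_one]
  · intro k _ hk
    rw [smat, Matrix.of_apply, if_neg hk, mul_zero]
  · simp

theorem smat_mul_self' (i j : Fin n) : smat i j * smat i j = 1 := by
  ext x y
  rw [smat_mul_apply, smat, Matrix.of_apply, Matrix.one_apply]
  congr 1
  rw [eq_iff_iff, Equiv.swap_apply_eq_iff, Equiv.swap_apply_self]

theorem smat_inv (i j : Fin n) : (smat i j)⁻¹ = smat i j :=
  Matrix.inv_eq_right_inv (smat_mul_self' i j)

theorem zmat_smat (j i k : Fin n) (m : ℤ) :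
    zmat r n j m * smat i k = smat i k * zmat r n (Equiv.swap i k j) m := by
  ext a b
  simp only [zmat, smat, Matrix.diagonal_mul, Matrix.mul_diagonal, Matrix.of_apply]
  by_cases h : a = Equiv.swap i k b
  · rw [if_pos h, one_mul, mul_one, h]
    congr 1
    rw [eq_iff_iff, Equiv.swap_apply_eq_iff]
  · rw [if_neg h, mul_zero, zero_mul]

theorem smat_zmat (i k j : Fin n) (m : ℤ) :
    smat i k * zmat r n j m = zmat r n (Equiv.swap i k j) m * smat i k := by
  have h := zmat_smat (r := r) (n := n) (Equiv.swap i k j) i k m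
  rw [Equiv.swap_apply_self] at h
  exact h.symm

/-- Entries of `ζ_i^l s_{ik} ζ_i^m`. -/
theorem ZSZ_apply (i k : Fin n) (l m : ℤ) (a b : Fin n) :
    (zmat r n i l * smat i k * zmat r n i m) a b =
      if a = Equiv.swap i k b then
        (if a = i then zeta r ^ l else 1) * (if b = i then zeta r ^ m else 1) else 0 := by
  simp only [zmat, smat, Matrix.mul_diagonal, Matrix.diagonal_mul, Matrix.of_apply]
  by_cases h : a = Equiv.swap i k b <;> simp [h]

end Aux
section Aux2
variable {r n : ℕ}

theorem zeta_zpow_eq (r : ℕ) {a b : ℤ} (h : a = b) : zeta r ^ a = zeta r ^ b := by rw [h]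

theorem zmat_mul_apply (j : Fin n) (m : ℤ) (M : Matrix (Fin n) (Fin n) ℂ) (a b : Fin n) :
    (zmat r n j m * M) a b = (if a = j then zeta r ^ m else 1) * M a b :=
  Matrix.diagonal_mul _ M a b

theorem mul_zmat_apply (j : Fin n) (m : ℤ) (M : Matrix (Fin n) (Fin n) ℂ) (a b : Fin n) :
    (M * zmat r n j m) a b = M a b * (if b = j then zeta r ^ m else 1) :=
  Matrix.mul_diagonal _ M a b

/-- Conjugation of `ζ_j^m` by the reflection, case `j ∉ {i,k}`. -/
theorem MI_comm (i k j : Fin n) (hji : j ≠ i) (hjk : j ≠ k) (l m : ℤ) :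
    (zmat r n i l * smat i k * zmat r n i (-l)) * zmat r n j m
      = zmat r n j m * (zmat r n i l * smat i k * zmat r n i (-l)) := by
  ext a b
  rw [mul_zmat_apply, zmat_mul_apply, ZSZ_apply]
  by_cases h : a = Equiv.swap i k b
  · subst h
    rcases eq_or_ne b i with rfl | hb
    · simp [Equiv.swap_apply_left, Ne.symm hji, hjk, Ne.symm hjk]
    · rcases eq_or_ne b k with rfl | hbk
      · simp [Equiv.swap_apply_right, Ne.symm hji, Ne.symm hjk, hji]
      · have hsw : Equiv.swap i k b = b := Equiv.swap_apply_of_ne_of_ne hb hbk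
        simp [hsw, hb]
  · simp [h]

/-- Conjugation of `ζ_i^m` by the reflection (index `i`): shifts the phase. -/
theorem MI_i (i k : Fin n) (hki : k ≠ i) (l m : ℤ) :
    (zmat r n i l * smat i k * zmat r n i (-l)) * zmat r n i m
      = zmat r n i m * (zmat r n i (l - m) * smat i k * zmat r n i (-(l - m))) := by
  ext a b
  rw [mul_zmat_apply, zmat_mul_apply, ZSZ_apply, ZSZ_apply]
  by_cases h : a = Equiv.swap i k b
  · subst h
    rcases eq_or_ne b i with rfl | hb
    · simp [Equiv.swap_apply_left, hki, Ne.symm hki]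
      rw [← zpow_neg, ← zpow_add₀ (zeta_ne_zero r)]
      exact zeta_zpow_eq r (by ring)
    · rcases eq_or_ne b k with rfl | hbk
      · simp [Equiv.swap_apply_right, hb, Ne.symm hb]
        rw [← zpow_add₀ (zeta_ne_zero r)]
        exact zeta_zpow_eq r (by ring)
      · have hsw : Equiv.swap i k b = b := Equiv.swap_apply_of_ne_of_ne hb hbk
        simp [hsw, hb]
  · simp [h]

/-- Conjugation of `ζ_k^m` by the reflection (index `k`): shifts the phase. -/
theorem MI_k (i k : Fin n) (hki : k ≠ i) (l m : ℤ) :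
    (zmat r n i l * smat i k * zmat r n i (-l)) * zmat r n k m
      = zmat r n k m * (zmat r n i (l + m) * smat i k * zmat r n i (-(l + m))) := by
  ext a b
  rw [mul_zmat_apply, zmat_mul_apply, ZSZ_apply, ZSZ_apply]
  by_cases h : a = Equiv.swap i k b
  · subst h
    rcases eq_or_ne b i with rfl | hb
    · simp [Equiv.swap_apply_left, hki, Ne.symm hki]
      rw [← zpow_neg, ← zpow_add₀ (zeta_ne_zero r)]
      exact zeta_zpow_eq r (by ring)
    · rcases eq_or_ne b k with rfl | hbk
      · simp [Equiv.swap_apply_right, hb, Ne.symm hb]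
        rw [← zpow_add₀ (zeta_ne_zero r)]
      · have hsw : Equiv.swap i k b = b := Equiv.swap_apply_of_ne_of_ne hb hbk
        simp [hsw, hb, hbk, Ne.symm hbk]
  · simp [h]

/-- Conjugation of a reflection by a transposition `s_{pq}`. -/
theorem MI_S (p q i k : Fin n) (l : ℤ) :
    smat p q * (zmat r n i l * smat i k * zmat r n i (-l))
      = (zmat r n (Equiv.swap p q i) l * smat (Equiv.swap p q i) (Equiv.swap p q k) *
          zmat r n (Equiv.swap p q i) (-l)) * smat p q := by
  ext x y
  rw [smat_mul_apply, mul_smat_apply, ZSZ_apply, ZSZ_apply]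
  have e1 : Equiv.swap (Equiv.swap p q i) (Equiv.swap p q k) (Equiv.swap p q y)
      = Equiv.swap p q (Equiv.swap i k y) := by
    rw [Equiv.swap_apply_apply]
    simp
  have c0 : (x = Equiv.swap p q (Equiv.swap i k y)) = (Equiv.swap p q x = Equiv.swap i k y) := by
    rw [eq_iff_iff]; exact Equiv.swap_apply_eq_iff.symm
  have c1 : (x = Equiv.swap p q i) = (Equiv.swap p q x = i) := by
    rw [eq_iff_iff]; exact Equiv.swap_apply_eq_iff.symm
  have c2 : (Equiv.swap p q y = Equiv.swap p q i) = (y = i) := by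
    rw [eq_iff_iff]; exact Equiv.apply_eq_iff_eq _
  simp only [e1, c0, c1, c2]

/-- `s_{i i'} · (ζ_{i'}^l s_{i' i} ζ_{i'}^{-l}) = ζ_i^l ζ_{i'}^{-l}`. -/
theorem MI_pair (i i' : Fin n) (l : ℤ) :
    smat i i' * (zmat r n i' l * smat i' i * zmat r n i' (-l))
      = zmat r n i l * zmat r n i' (-l) := by
  ext x y
  rw [smat_mul_apply, ZSZ_apply, zmat_mul_apply, zmat, Matrix.diagonal_apply]
  rw [show Equiv.swap i' i = Equiv.swap i i' from Equiv.swap_comm i' i]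
  have c1 : (Equiv.swap i i' x = Equiv.swap i i' y) = (x = y) := by
    rw [eq_iff_iff]; exact Equiv.apply_eq_iff_eq _
  have c2 : (Equiv.swap i i' x = i') = (x = i) := by
    rw [eq_iff_iff, Equiv.swap_apply_eq_iff, Equiv.swap_apply_right]
  simp only [c1, c2]
  by_cases hxy : x = y
  · subst hxy; simp
  · simp [hxy]
end Aux2
section Aux3
variable {r n : ℕ} {κ c₀ : ℂ} {c : ℕ → ℂ}

theorem cT_mul' {u w v : GMon r n} (h : u.1 = w.1 * v.1) :
    cT r n κ c₀ c u = cT r n κ c₀ c w * cT r n κ c₀ c v := by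
  have h2 := RingQuot.mkAlgHom_rel ℂ
    (CRel.t_mul (r := r) (n := n) (κ := κ) (c₀ := c₀) (c := c) u w v h)
  simpa [cT, map_mul] using h2

theorem cT_comm' {w v v' w' : GMon r n} (h : w.1 * v.1 = v'.1 * w'.1) :
    cT r n κ c₀ c w * cT r n κ c₀ c v = cT r n κ c₀ c v' * cT r n κ c₀ c w' := by
  rw [← cT_mul' (u := ⟨w.1 * v.1, w.2.mul v.2⟩) (w := w) (v := v) rfl,
      cT_mul' (u := ⟨w.1 * v.1, w.2.mul v.2⟩) (w := v') (v := w') h]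

theorem cT_X' (w : GMon r n) (i : Fin n) :
    cT r n κ c₀ c w * cX r n κ c₀ c i
      = ∑ j, (w.1⁻¹ i j) • (cX r n κ c₀ c j * cT r n κ c₀ c w) := by
  have h2 := RingQuot.mkAlgHom_rel ℂ
    (CRel.t_x (r := r) (n := n) (κ := κ) (c₀ := c₀) (c := c) w i)
  simpa [cT, cX, map_mul, map_sum, map_smul] using h2

theorem cT_Y' (w : GMon r n) (i : Fin n) :
    cT r n κ c₀ c w * cY r n κ c₀ c i
      = ∑ j, (w.1 j i) • (cY r n κ c₀ c j * cT r n κ c₀ c w) := by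
  have h2 := RingQuot.mkAlgHom_rel ℂ
    (CRel.t_y (r := r) (n := n) (κ := κ) (c₀ := c₀) (c := c) w i)
  simpa [cT, cY, map_mul, map_sum, map_smul] using h2

theorem Tz_X (j : Fin n) (m : ℤ) (i : Fin n) :
    cT r n κ c₀ c (zetaW r j m) * cX r n κ c₀ c i
      = (if i = j then zeta r ^ (-m) else 1) •
          (cX r n κ c₀ c i * cT r n κ c₀ c (zetaW r j m)) := by
  rw [cT_X', show (zetaW r j m).1⁻¹ = zmat r n j (-m) from zmat_inv j m,
    Finset.sum_eq_single i]
  · rw [show zmat r n j (-m) i i = (if i = j then zeta r ^ (-m) else 1) from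
      Matrix.diagonal_apply_eq _ i]
  · intro k _ hk
    rw [show zmat r n j (-m) i k = 0 from Matrix.diagonal_apply_ne _ (Ne.symm hk), zero_smul]
  · intro h; exact absurd (Finset.mem_univ i) h

theorem Tz_Y (j : Fin n) (m : ℤ) (i : Fin n) :
    cT r n κ c₀ c (zetaW r j m) * cY r n κ c₀ c i
      = (if i = j then zeta r ^ m else 1) •
          (cY r n κ c₀ c i * cT r n κ c₀ c (zetaW r j m)) := by
  rw [cT_Y', Finset.sum_eq_single i]
  · rw [show (zetaW r j m).1 i i = (if i = j then zeta r ^ m else 1) from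
      Matrix.diagonal_apply_eq _ i]
  · intro k _ hk
    rw [show (zetaW r j m).1 k i = 0 from Matrix.diagonal_apply_ne _ hk, zero_smul]
  · intro h; exact absurd (Finset.mem_univ i) h

theorem Ts_X (p q i : Fin n) :
    cT r n κ c₀ c (sW r p q) * cX r n κ c₀ c i
      = cX r n κ c₀ c (Equiv.swap p q i) * cT r n κ c₀ c (sW r p q) := by
  rw [cT_X', show (sW r p q).1⁻¹ = smat p q from smat_inv p q,
    Finset.sum_eq_single (Equiv.swap p q i)]
  · rw [show smat p q i (Equiv.swap p q i) = 1 from by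
      rw [smat, Matrix.of_apply, if_pos (Equiv.swap_apply_self p q i).symm], one_smul]
  · intro k _ hk
    rw [show smat p q i k = 0 from by
      rw [smat, Matrix.of_apply,
        if_neg (fun h => hk (by rw [h, Equiv.swap_apply_self]))], zero_smul]
  · intro h; exact absurd (Finset.mem_univ _) h

theorem Ts_Y (p q i : Fin n) :
    cT r n κ c₀ c (sW r p q) * cY r n κ c₀ c i
      = cY r n κ c₀ c (Equiv.swap p q i) * cT r n κ c₀ c (sW r p q) := by
  rw [cT_Y', Finset.sum_eq_single (Equiv.swap p q i)]
  · rw [show (sW r p q).1 (Equiv.swap p q i) i = 1 from by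
      rw [show (sW r p q).1 = smat p q from rfl, smat, Matrix.of_apply, if_pos rfl], one_smul]
  · intro k _ hk
    rw [show (sW r p q).1 k i = 0 from by
      rw [show (sW r p q).1 = smat p q from rfl, smat, Matrix.of_apply, if_neg hk], zero_smul]
  · intro h; exact absurd (Finset.mem_univ _) h

theorem Tz_yx (j : Fin n) (m : ℤ) (i : Fin n) :
    cT r n κ c₀ c (zetaW r j m) * (cY r n κ c₀ c i * cX r n κ c₀ c i)
      = (cY r n κ c₀ c i * cX r n κ c₀ c i) * cT r n κ c₀ c (zetaW r j m) := by
  rw [← mul_assoc, Tz_Y, smul_mul_assoc, mul_assoc, Tz_X, mul_smul_comm, smul_smul]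
  rw [show ((if i = j then zeta r ^ m else 1) * (if i = j then zeta r ^ (-m) else 1)) = 1 from by
    split_ifs with h
    · rw [← zpow_add₀ (zeta_ne_zero r)]; simp
    · rw [one_mul]]
  rw [one_smul, ← mul_assoc]

theorem Ts_yx (p q i : Fin n) (h : Equiv.swap p q i = i) :
    cT r n κ c₀ c (sW r p q) * (cY r n κ c₀ c i * cX r n κ c₀ c i)
      = (cY r n κ c₀ c i * cX r n κ c₀ c i) * cT r n κ c₀ c (sW r p q) := by
  rw [← mul_assoc, Ts_Y, h, mul_assoc, Ts_X, h, ← mul_assoc]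

theorem sum_shift_one {M : Type*} [AddCommGroup M] {r : ℕ} (g : ℤ → M)
    (hg : ∀ l, g (l + r) = g l) :
    ∑ l ∈ Finset.range r, g ((l : ℤ) + 1) = ∑ l ∈ Finset.range r, g (l : ℤ) := by
  have h1 : ∑ l ∈ Finset.range (r + 1), g (l : ℤ)
      = (∑ l ∈ Finset.range r, g ((l : ℤ) + 1)) + g 0 := by
    have := Finset.sum_range_succ' (fun l : ℕ => g (l : ℤ)) r
    simpa [Nat.cast_add, Nat.cast_one] using this
  have h2 : ∑ l ∈ Finset.range (r + 1), g (l : ℤ)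
      = (∑ l ∈ Finset.range r, g (l : ℤ)) + g (r : ℤ) := Finset.sum_range_succ _ r
  have h3 : g (r : ℤ) = g 0 := by simpa using hg 0
  have h4 := h1.symm.trans h2
  rw [h3] at h4
  exact add_right_cancel h4

theorem sum_shift_neg_one {M : Type*} [AddCommGroup M] {r : ℕ} (g : ℤ → M)
    (hg : ∀ l, g (l + r) = g l) :
    ∑ l ∈ Finset.range r, g ((l : ℤ) - 1) = ∑ l ∈ Finset.range r, g (l : ℤ) := by
  have h := sum_shift_one (fun l => g (l - 1))
    (fun l => by have := hg (l - 1); rwa [sub_add_eq_add_sub] at this)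
  simpa using h.symm

theorem zmat_period' (hr : 0 < r) (i : Fin n) (l : ℤ) :
    zmat r n i (-(l + r)) = zmat r n i (-l) := by
  have h := zmat_period (r := r) (n := n) hr i (-(l + r))
  rw [show (-(l + (r : ℤ)) + r) = -l by ring] at h
  exact h.symm

theorem reflW_period (hr : 0 < r) (i k : Fin n) (l : ℤ) :
    reflW r i k (l + r) = reflW r i k l := by
  apply Subtype.ext
  show zmat r n i (l + r) * smat i k * zmat r n i (-(l + r))
      = zmat r n i l * smat i k * zmat r n i (-l)
  rw [zmat_period hr, zmat_period' hr]

theorem key_phi_z (hr : 0 < r) (i k j : Fin n) (hki : k ≠ i) :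
    (∑ l ∈ Finset.range r, cT r n κ c₀ c (reflW r i k (l : ℤ))) * cT r n κ c₀ c (zetaW r j 1)
      = cT r n κ c₀ c (zetaW r j 1) *
          ∑ l ∈ Finset.range r, cT r n κ c₀ c (reflW r i k (l : ℤ)) := by
  have hper : ∀ l : ℤ, cT r n κ c₀ c (reflW r i k (l + r)) = cT r n κ c₀ c (reflW r i k l) :=
    fun l => congrArg _ (reflW_period hr i k l)
  rcases eq_or_ne j i with rfl | hji
  · calc (∑ l ∈ Finset.range r, cT r n κ c₀ c (reflW r j k (l : ℤ))) * cT r n κ c₀ c (zetaW r j 1)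
        = ∑ l ∈ Finset.range r,
            cT r n κ c₀ c (zetaW r j 1) * cT r n κ c₀ c (reflW r j k ((l : ℤ) - 1)) := by
          rw [Finset.sum_mul]
          exact Finset.sum_congr rfl (fun l _ => cT_comm' (MI_i j k hki (l : ℤ) 1))
      _ = cT r n κ c₀ c (zetaW r j 1) *
            ∑ l ∈ Finset.range r, cT r n κ c₀ c (reflW r j k (l : ℤ)) := by
          rw [← Finset.mul_sum,
            sum_shift_neg_one (fun l => cT r n κ c₀ c (reflW r j k l)) hper]
  · rcases eq_or_ne j k with rfl | hjk
    · calc (∑ l ∈ Finset.range r, cT r n κ c₀ c (reflW r i j (l : ℤ))) * cT r n κ c₀ c (zetaW r j 1)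
          = ∑ l ∈ Finset.range r,
              cT r n κ c₀ c (zetaW r j 1) * cT r n κ c₀ c (reflW r i j ((l : ℤ) + 1)) := by
            rw [Finset.sum_mul]
            exact Finset.sum_congr rfl (fun l _ => cT_comm' (MI_k i j hki (l : ℤ) 1))
        _ = cT r n κ c₀ c (zetaW r j 1) *
              ∑ l ∈ Finset.range r, cT r n κ c₀ c (reflW r i j (l : ℤ)) := by
            rw [← Finset.mul_sum,
              sum_shift_one (fun l => cT r n κ c₀ c (reflW r i j l)) hper]
    · calc (∑ l ∈ Finset.range r, cT r n κ c₀ c (reflW r i k (l : ℤ))) * cT r n κ c₀ c (zetaW r j 1)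
          = ∑ l ∈ Finset.range r,
              cT r n κ c₀ c (zetaW r j 1) * cT r n κ c₀ c (reflW r i k (l : ℤ)) := by
            rw [Finset.sum_mul]
            exact Finset.sum_congr rfl (fun l _ => cT_comm' (MI_comm i k j hji hjk (l : ℤ) 1))
        _ = cT r n κ c₀ c (zetaW r j 1) *
              ∑ l ∈ Finset.range r, cT r n κ c₀ c (reflW r i k (l : ℤ)) := by
            rw [← Finset.mul_sum]

end Aux3
section Aux4
variable {r n : ℕ} {κ c₀ : ℂ} {c : ℕ → ℂ}

theorem Tz_phi (hr : 0 < r) (i j : Fin n) :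
    cPhi r n κ c₀ c i * cT r n κ c₀ c (zetaW r j 1)
      = cT r n κ c₀ c (zetaW r j 1) * cPhi r n κ c₀ c i := by
  rw [cPhi, Finset.sum_mul, Finset.mul_sum]
  exact Finset.sum_congr rfl (fun k hk => key_phi_z hr i k j (Finset.mem_filter.mp hk).2.ne)

theorem Ts_phi_iii (i j j' : Fin n) (hij : i ≠ j) (hij' : i ≠ j')
    (hlt : ∀ k : Fin n, k < i ↔ Equiv.swap j j' k < i) :
    cPhi r n κ c₀ c i * cT r n κ c₀ c (sW r j j')
      = cT r n κ c₀ c (sW r j j') * cPhi r n κ c₀ c i := by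
  have hstep : ∀ (k : Fin n) (l : ℤ),
      cT r n κ c₀ c (reflW r i k l) * cT r n κ c₀ c (sW r j j')
        = cT r n κ c₀ c (sW r j j') * cT r n κ c₀ c (reflW r i (Equiv.swap j j' k) l) := by
    intro k l
    refine cT_comm' ?_
    have h := MI_S (r := r) (n := n) j j' i (Equiv.swap j j' k) l
    rw [Equiv.swap_apply_of_ne_of_ne hij hij', Equiv.swap_apply_self] at h
    exact h.symm
  rw [cPhi, Finset.sum_mul, Finset.mul_sum]
  calc ∑ k ∈ Finset.univ.filter (fun k : Fin n => k < i),
        (∑ l ∈ Finset.range r, cT r n κ c₀ c (reflW r i k (l : ℤ))) * cT r n κ c₀ c (sW r j j')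
      = ∑ k ∈ Finset.univ.filter (fun k : Fin n => k < i),
          cT r n κ c₀ c (sW r j j') *
            ∑ l ∈ Finset.range r, cT r n κ c₀ c (reflW r i (Equiv.swap j j' k) (l : ℤ)) := by
        refine Finset.sum_congr rfl (fun k _ => ?_)
        rw [Finset.sum_mul, Finset.mul_sum]
        exact Finset.sum_congr rfl (fun l _ => hstep k (l : ℤ))
    _ = ∑ k ∈ Finset.univ.filter (fun k : Fin n => k < i),
          cT r n κ c₀ c (sW r j j') *
            ∑ l ∈ Finset.range r, cT r n κ c₀ c (reflW r i k (l : ℤ)) := by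
        refine Finset.sum_equiv (Equiv.swap j j') (fun k => ?_) (fun k _ => rfl)
        simpa [Finset.mem_filter] using hlt k

theorem Ts_yx2 (i i' : Fin n) :
    cT r n κ c₀ c (sW r i i') * (cY r n κ c₀ c i' * cX r n κ c₀ c i')
      = (cY r n κ c₀ c i * cX r n κ c₀ c i) * cT r n κ c₀ c (sW r i i') := by
  rw [← mul_assoc, Ts_Y, Equiv.swap_apply_right, mul_assoc, Ts_X, Equiv.swap_apply_right,
    ← mul_assoc]

theorem Ts_phi_ii (i i' : Fin n)
    (hins : Finset.univ.filter (fun k : Fin n => k < i')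
        = insert i (Finset.univ.filter (fun k : Fin n => k < i)))
    (hk' : ∀ k : Fin n, k < i → k ≠ i') :
    cT r n κ c₀ c (sW r i i') * cPhi r n κ c₀ c i'
      = cPi r n κ c₀ c i i' + cPhi r n κ c₀ c i * cT r n κ c₀ c (sW r i i') := by
  rw [cPhi, hins, Finset.sum_insert (by simp), mul_add]
  congr 1
  · rw [Finset.mul_sum, cPi]
    refine Finset.sum_congr rfl (fun l _ => ?_)
    exact (cT_mul' (u := pairW r i i' (l : ℤ)) (w := sW r i i') (v := reflW r i' i (l : ℤ))
      (MI_pair i i' (l : ℤ)).symm).symm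
  · rw [cPhi, Finset.mul_sum, Finset.sum_mul]
    refine Finset.sum_congr rfl (fun k hk => ?_)
    have hki : k < i := (Finset.mem_filter.mp hk).2
    rw [Finset.mul_sum, Finset.sum_mul]
    refine Finset.sum_congr rfl (fun l _ => ?_)
    refine (cT_comm' ?_).symm
    have h := MI_S (r := r) (n := n) i i' i' k (l : ℤ)
    rw [Equiv.swap_apply_right, Equiv.swap_apply_of_ne_of_ne hki.ne (hk' k hki)] at h
    exact h.symm

end Aux4

/-- In `H`: (i) `z_i t_{ζ_j} = t_{ζ_j} z_i`;
(ii) `z_i t_{s_i} = t_{s_i} z_{i+1} - c₀ π_i`; (iii) `z_i t_{s_j} = t_{s_j} z_i` for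
`i ∉ {j, j+1}`. -/
theorem stmt8 (hr : 1 ≤ r) (hn : 2 ≤ n) :
    (∀ i j : Fin n,
      cz r n κ c₀ c i * cT r n κ c₀ c (zetaW r j 1) =
        cT r n κ c₀ c (zetaW r j 1) * cz r n κ c₀ c i)
    ∧ (∀ i i' : Fin n, (i' : ℕ) = (i : ℕ) + 1 →
      cz r n κ c₀ c i * cT r n κ c₀ c (sW r i i') =
        cT r n κ c₀ c (sW r i i') * cz r n κ c₀ c i' - c₀ • cPi r n κ c₀ c i i')
    ∧ (∀ i j j' : Fin n, (j' : ℕ) = (j : ℕ) + 1 → i ≠ j → i ≠ j' →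
      cz r n κ c₀ c i * cT r n κ c₀ c (sW r j j') =
        cT r n κ c₀ c (sW r j j') * cz r n κ c₀ c i) := by
  have hr0 : 0 < r := hr
  refine ⟨?_, ?_, ?_⟩
  · intro i j
    rw [cz, add_mul, mul_add, smul_mul_assoc, mul_smul_comm, Tz_phi hr0 i j, Tz_yx]
  · intro i i' hii
    have hins : Finset.univ.filter (fun k : Fin n => k < i')
        = insert i (Finset.univ.filter (fun k : Fin n => k < i)) := by
      ext k
      simp only [Finset.mem_filter, Finset.mem_univ, true_and, Finset.mem_insert, Fin.lt_def,
        Fin.ext_iff]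
      omega
    have hk' : ∀ k : Fin n, k < i → k ≠ i' := by
      intro k hk h
      rw [h, Fin.lt_def] at hk
      omega
    rw [cz, cz, add_mul, smul_mul_assoc, mul_add, mul_smul_comm, Ts_phi_ii i i' hins hk',
      Ts_yx2, smul_add]
    abel
  · intro i j j' hjj hij hij'
    have hijv : (i : ℕ) ≠ (j : ℕ) := fun h => hij (Fin.val_injective h)
    have hijv' : (i : ℕ) ≠ (j' : ℕ) := fun h => hij' (Fin.val_injective h)
    have hlt : ∀ k : Fin n, k < i ↔ Equiv.swap j j' k < i := by
      intro k
      rcases eq_or_ne k j with rfl | h1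
      · rw [Equiv.swap_apply_left, Fin.lt_def, Fin.lt_def]
        omega
      · rcases eq_or_ne k j' with rfl | h2
        · rw [Equiv.swap_apply_right, Fin.lt_def, Fin.lt_def]
          omega
        · rw [Equiv.swap_apply_of_ne_of_ne h1 h2]
    rw [cz, add_mul, mul_add, smul_mul_assoc, mul_smul_comm, Ts_phi_iii i j j' hij hij' hlt,
      Ts_yx j j' i (Equiv.swap_apply_of_ne_of_ne hij hij')]
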